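/- arXiv:1008.4703 — 2 statements merged into one kernel-verified Lean document; each statement's English description precedes it below -/
import Mathlib

section
/- The map ψ restricts to a bijection from the light cone K = {x ∈ M : q(x) = 0} onto the set 𝔍_c = {U ∈ U(2) : det(I + U) = 0 and det(I − U) ≠ 0}; that is, ψ⁻¹(𝔍_c) = K. -/
noncomputable section

open Matrix Complex

abbrev Mat2 := Matrix (Fin 2) (Fin 2) ℂ

/-- Minkowski quadratic form on ℝ⁴. -/
def mq (x : Fin 4 → ℝ) : ℝ := -(x 0)^2 + (x 1)^2 + (x 2)^2 + (x 3)^2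

/-- The isomorphism of Minkowski space with Hermitian 2×2 matrices. -/
def mphi (x : Fin 4 → ℝ) : Mat2 :=
  !![(x 0 : ℂ) + (x 3 : ℂ), (x 1 : ℂ) - Complex.I * (x 2 : ℂ);
     (x 1 : ℂ) + Complex.I * (x 2 : ℂ), (x 0 : ℂ) - (x 3 : ℂ)]

/-- The Cayley transform. -/
def cayley (X : Mat2) : Mat2 := (X - Complex.I • 1) * (X + Complex.I • 1)⁻¹

/-- ψ = u ∘ φ : M → U(2). -/
def mpsi (x : Fin 4 → ℝ) : Mat2 := cayley (mphi x)

/-! ### Auxiliary lemmas -/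

lemma mphi_herm (x : Fin 4 → ℝ) : (mphi x)ᴴ = mphi x := by
  ext i j
  fin_cases i <;> fin_cases j <;>
    simp [mphi, Matrix.conjTranspose_apply, Complex.ext_iff]

lemma det_mphi (x : Fin 4 → ℝ) : (mphi x).det = -(mq x : ℂ) := by
  rw [mphi, Matrix.det_fin_two_of, mq]
  push_cast
  ring_nf
  simp [Complex.I_sq]
  ring

lemma det_mphi_add (x : Fin 4 → ℝ) :
    (mphi x + Complex.I • 1).det = ((-(mq x) - 1 : ℝ) : ℂ) + (2 * x 0 : ℝ) * Complex.I := by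
  rw [Matrix.det_fin_two]
  simp [mphi, Matrix.add_apply, Matrix.smul_apply, Matrix.one_apply, mq]
  ring_nf
  simp [Complex.I_sq]
  ring

lemma det_mphi_add_ne (x : Fin 4 → ℝ) : (mphi x + Complex.I • 1).det ≠ 0 := by
  rw [det_mphi_add]
  intro h
  have h1 : -(mq x) - 1 = 0 := by simpa using congrArg Complex.re h
  have h2 : 2 * x 0 = 0 := by simpa using congrArg Complex.im h
  rw [mq] at h1
  nlinarith [sq_nonneg (x 1), sq_nonneg (x 2), sq_nonneg (x 3)]

lemma star_c : (Complex.I • (1:Mat2))ᴴ = -(Complex.I • 1) := by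
  simp [Matrix.conjTranspose_smul]

lemma inv_comm {A B : Mat2} (h : Commute A B) (hB : IsUnit B.det) :
    B⁻¹ * A = A * B⁻¹ := by
  have h1 : B⁻¹ * (B * A) * B⁻¹ = B⁻¹ * (A * B) * B⁻¹ := by rw [h.eq]
  rw [← Matrix.mul_assoc, Matrix.nonsing_inv_mul _ hB, one_mul] at h1
  rw [← Matrix.mul_assoc, Matrix.mul_assoc (B⁻¹ * A), Matrix.mul_nonsing_inv _ hB,
    Matrix.mul_one] at h1
  exact h1.symm

lemma sub_eq_star {X : Mat2} (hX : Xᴴ = X) :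
    X - Complex.I • 1 = (X + Complex.I • 1)ᴴ := by
  rw [Matrix.conjTranspose_add, hX, star_c, sub_eq_add_neg]

lemma comm_pm (X : Mat2) : Commute (X + Complex.I • 1) (X - Complex.I • 1) := by
  have hc : Commute X (Complex.I • (1:Mat2)) := (Commute.one_right X).smul_right _
  exact ((Commute.refl X).add_left hc.symm).sub_right ((hc.add_left (Commute.refl _)))

lemma isUnit_det_sub {X : Mat2} (hX : Xᴴ = X) (hA : IsUnit (X + Complex.I • 1).det) :
    IsUnit (X - Complex.I • 1).det := by
  rw [sub_eq_star hX, Matrix.det_conjTranspose]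
  exact hA.star

lemma cayley_unitary {X : Mat2} (hX : Xᴴ = X) (hA : IsUnit (X + Complex.I • 1).det) :
    cayley X ∈ Matrix.unitaryGroup (Fin 2) ℂ := by
  rw [Matrix.mem_unitaryGroup_iff]
  have hstar : star (cayley X) = (X - Complex.I • 1)⁻¹ * (X + Complex.I • 1) := by
    show (cayley X)ᴴ = _
    rw [cayley, Matrix.conjTranspose_mul, Matrix.conjTranspose_nonsing_inv,
      ← sub_eq_star hX]
    congr 1
    rw [Matrix.conjTranspose_sub, hX, star_c, sub_neg_eq_add]
  rw [hstar, cayley]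
  have key : (X + Complex.I • 1)⁻¹ * (X - Complex.I • 1)⁻¹
      = (X - Complex.I • 1)⁻¹ * (X + Complex.I • 1)⁻¹ := by
    rw [← Matrix.mul_inv_rev, ← Matrix.mul_inv_rev, (comm_pm X).eq]
  rw [Matrix.mul_assoc, ← Matrix.mul_assoc (X + Complex.I • 1)⁻¹, key,
    Matrix.mul_assoc, Matrix.nonsing_inv_mul _ hA, Matrix.mul_one,
    Matrix.mul_nonsing_inv _ (isUnit_det_sub hX hA)]

lemma one_add_cayley {X : Mat2} (hA : IsUnit (X + Complex.I • 1).det) :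
    1 + cayley X = ((2:ℂ) • X) * (X + Complex.I • 1)⁻¹ := by
  conv_lhs => rw [← Matrix.mul_nonsing_inv _ hA]
  rw [cayley, ← Matrix.add_mul]
  congr 1
  rw [two_smul]
  abel

lemma one_sub_cayley {X : Mat2} (hA : IsUnit (X + Complex.I • 1).det) :
    1 - cayley X = ((2 * Complex.I) • (1:Mat2)) * (X + Complex.I • 1)⁻¹ := by
  conv_lhs => rw [← Matrix.mul_nonsing_inv _ hA]
  rw [cayley, ← Matrix.sub_mul]
  congr 1
  rw [two_mul, add_smul]
  abel

lemma det_one_add_cayley {X : Mat2} (hA : IsUnit (X + Complex.I • 1).det) :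
    (1 + cayley X).det = 0 ↔ X.det = 0 := by
  rw [one_add_cayley hA, Matrix.det_mul, Matrix.det_smul]
  have h2 : ((X + Complex.I • 1)⁻¹).det ≠ 0 :=
    (Matrix.isUnit_nonsing_inv_det _ hA).ne_zero
  constructor
  · intro h
    rcases mul_eq_zero.mp h with h' | h'
    · rcases mul_eq_zero.mp h' with h'' | h''
      · norm_num at h''
      · exact h''
    · exact absurd h' h2
  · intro h; rw [h]; ring

lemma det_one_sub_cayley {X : Mat2} (hA : IsUnit (X + Complex.I • 1).det) :
    (1 - cayley X).det ≠ 0 := by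
  rw [one_sub_cayley hA, Matrix.det_mul, Matrix.det_smul]
  have h2 : ((X + Complex.I • 1)⁻¹).det ≠ 0 :=
    (Matrix.isUnit_nonsing_inv_det _ hA).ne_zero
  intro h
  rcases mul_eq_zero.mp h with h' | h'
  · rw [Matrix.det_one, mul_one] at h'
    norm_num [Complex.I_ne_zero] at h'
  · exact h2 h'

lemma cayley_inj {X Y : Mat2} (hAX : IsUnit (X + Complex.I • 1).det)
    (hAY : IsUnit (Y + Complex.I • 1).det) (h : cayley X = cayley Y) : X = Y := by
  have h2 : ((2 * Complex.I) • (1:Mat2)) * (X + Complex.I • 1)⁻¹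
      = ((2 * Complex.I) • (1:Mat2)) * (Y + Complex.I • 1)⁻¹ := by
    rw [← one_sub_cayley hAX, ← one_sub_cayley hAY, h]
  rw [Matrix.smul_mul, Matrix.smul_mul, Matrix.one_mul, Matrix.one_mul] at h2
  have h2I : (2 * Complex.I) ≠ 0 := by simp [Complex.I_ne_zero]
  have h3 : (X + Complex.I • 1)⁻¹ = (Y + Complex.I • 1)⁻¹ :=
    smul_right_injective Mat2 h2I h2
  have h4 := congrArg Inv.inv h3
  rw [Matrix.nonsing_inv_nonsing_inv _ hAX, Matrix.nonsing_inv_nonsing_inv _ hAY] at h4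
  exact add_right_cancel h4

lemma mphi_inj : Function.Injective mphi := by
  intro x y h
  have e : ∀ i j, mphi x i j = mphi y i j := fun i j => by rw [h]
  have h00 := e 0 0
  have h01 := e 0 1
  have h11 := e 1 1
  simp only [mphi, Matrix.cons_val', Matrix.cons_val_zero, Matrix.cons_val_one,
    Matrix.head_cons, Matrix.head_fin_const, Matrix.of_apply, Matrix.empty_val',
    Matrix.cons_val_fin_one] at h00 h01 h11
  have r00 : x 0 + x 3 = y 0 + y 3 := by exact_mod_cast h00
  have r11 : x 0 - x 3 = y 0 - y 3 := by exact_mod_cast h11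
  have r1 : x 1 = y 1 := by
    have := congrArg Complex.re h01; simpa using this
  have r2 : x 2 = y 2 := by
    have := congrArg Complex.im h01; simpa using this
  funext i
  fin_cases i
  · show x 0 = y 0; linarith
  · exact r1
  · exact r2
  · show x 3 = y 3; linarith

/-- Build a real preimage from a Hermitian matrix. -/
lemma exists_mphi {X : Mat2} (hX : Xᴴ = X) : ∃ x : Fin 4 → ℝ, mphi x = X := by
  have h00 : (starRingEnd ℂ) (X 0 0) = X 0 0 := by
    have := congrFun (congrFun hX 0) 0
    simpa [Matrix.conjTranspose_apply] using this
  have h11 : (starRingEnd ℂ) (X 1 1) = X 1 1 := by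
    have := congrFun (congrFun hX 1) 1
    simpa [Matrix.conjTranspose_apply] using this
  have h10 : (starRingEnd ℂ) (X 0 1) = X 1 0 := by
    have := congrFun (congrFun hX 1) 0
    simpa [Matrix.conjTranspose_apply] using this
  have h00im : (X 0 0).im = 0 := (Complex.conj_eq_iff_im).mp h00
  have h11im : (X 1 1).im = 0 := (Complex.conj_eq_iff_im).mp h11
  refine ⟨![((X 0 0).re + (X 1 1).re)/2, (X 0 1).re, -(X 0 1).im,
          ((X 0 0).re - (X 1 1).re)/2], ?_⟩
  ext i j
  fin_cases i <;> fin_cases j <;>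
    simp [mphi, Complex.ext_iff, h00im, h11im, ← h10, Complex.conj_re, Complex.conj_im] <;>
    ring

lemma commute_one_pm (U : Mat2) : Commute (1 + U) (1 - U) := by
  have h1 : Commute (1 + U) (1 : Mat2) := Commute.one_right _
  have h2 : Commute (1 + U) U := Commute.add_left (Commute.one_left U) (Commute.refl U)
  exact h1.sub_right h2

lemma surj_aux {U : Mat2} (hU : U ∈ Matrix.unitaryGroup (Fin 2) ℂ)
    (h1 : (1 + U).det = 0) (h2 : (1 - U).det ≠ 0) :
    ∃ x : Fin 4 → ℝ, mq x = 0 ∧ cayley (mphi x) = U := by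
  have hdet : IsUnit (1 - U).det := isUnit_iff_ne_zero.mpr h2
  set X : Mat2 := Complex.I • ((1 + U) * (1 - U)⁻¹) with hXdef
  have hVU : star U * U = 1 := (Unitary.mem_iff.mp hU).1
  have hUV : U * star U = 1 := (Unitary.mem_iff.mp hU).2
  have hXh : Xᴴ = X := by
    have hsub : (1 : Mat2) - star U = star U * (U - 1) := by
      rw [Matrix.mul_sub, hVU, Matrix.mul_one]
    have hadd : (1 : Mat2) + star U = star U * (U + 1) := by
      rw [Matrix.mul_add, hVU, Matrix.mul_one]
    have hUinv : (star U)⁻¹ = U := Matrix.inv_eq_right_inv hVU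
    have hneg : (U - 1)⁻¹ = -(1 - U)⁻¹ := by
      apply Matrix.inv_eq_right_inv
      rw [Matrix.mul_neg, ← Matrix.neg_mul]
      rw [neg_sub, Matrix.mul_nonsing_inv _ hdet]
    have hstar : Xᴴ = (-Complex.I) • ((1 - star U)⁻¹ * (1 + star U)) := by
      rw [hXdef, Matrix.conjTranspose_smul, Matrix.conjTranspose_mul,
        Matrix.conjTranspose_nonsing_inv, Matrix.conjTranspose_add,
        Matrix.conjTranspose_sub, Matrix.conjTranspose_one]
      simp [Matrix.mul_assoc]
      rfl
    rw [hstar, hsub, hadd, Matrix.mul_inv_rev, hUinv, hneg]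
    have key : -(1 - U)⁻¹ * U * (star U * (U + 1)) = -((1 - U)⁻¹ * (U + 1)) := by
      rw [Matrix.mul_assoc, ← Matrix.mul_assoc U, hUV, Matrix.one_mul, Matrix.neg_mul]
    rw [Matrix.mul_assoc] at key ⊢
    rw [key, smul_neg, neg_smul, neg_neg]
    have hcomm : (1 - U)⁻¹ * (U + 1) = (U + 1) * (1 - U)⁻¹ := by
      apply inv_comm _ hdet
      have := commute_one_pm U
      rw [add_comm 1 U] at this
      exact this
    rw [hcomm, hXdef, add_comm U 1]
  have hXdet : X.det = 0 := by
    rw [hXdef, Matrix.det_smul, Matrix.det_mul, h1]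
    simp
  have hsum : (1 : Mat2) + U + (1 - U) = (2:ℂ) • 1 := by
    rw [two_smul]; abel
  have hXp : X + Complex.I • 1 = (2 * Complex.I) • (1 - U)⁻¹ := by
    rw [hXdef,
      show (Complex.I • (1:Mat2)) = Complex.I • ((1-U) * (1-U)⁻¹) from by
        rw [Matrix.mul_nonsing_inv _ hdet]]
    rw [← smul_add, ← Matrix.add_mul, hsum, Matrix.smul_mul, Matrix.one_mul,
      smul_smul, mul_comm Complex.I 2]
  have hdiff : (1 : Mat2) + U - (1 - U) = (2:ℂ) • U := by
    rw [two_smul]; abel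
  have hXm : X - Complex.I • 1 = (2 * Complex.I) • (U * (1 - U)⁻¹) := by
    rw [hXdef,
      show (Complex.I • (1:Mat2)) = Complex.I • ((1-U) * (1-U)⁻¹) from by
        rw [Matrix.mul_nonsing_inv _ hdet]]
    rw [← smul_sub, ← Matrix.sub_mul, hdiff, Matrix.smul_mul,
      smul_smul, mul_comm Complex.I 2]
  have hinv : ((2 * Complex.I) • (1 - U)⁻¹)⁻¹ = (2 * Complex.I)⁻¹ • (1 - U) := by
    apply Matrix.inv_eq_right_inv
    rw [Matrix.smul_mul, Matrix.mul_smul, smul_smul,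
      Matrix.nonsing_inv_mul _ hdet]
    rw [mul_inv_cancel₀ (by simp [Complex.I_ne_zero] : (2 : ℂ) * Complex.I ≠ 0)]
    simp
  have hcay : cayley X = U := by
    rw [cayley, hXm, hXp, hinv, Matrix.smul_mul, Matrix.mul_smul, smul_smul,
      mul_inv_cancel₀ (by simp [Complex.I_ne_zero] : (2 : ℂ) * Complex.I ≠ 0),
      one_smul, Matrix.mul_assoc, Matrix.nonsing_inv_mul _ hdet, Matrix.mul_one]
  obtain ⟨x, hx⟩ := exists_mphi hXh
  refine ⟨x, ?_, by rw [hx, hcay]⟩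
  have hc : (mq x : ℂ) = 0 := by
    have := det_mphi x
    rw [hx, hXdet] at this
    exact neg_eq_zero.mp this.symm
  exact_mod_cast hc

lemma mpsi_key (x : Fin 4 → ℝ) :
    mpsi x ∈ Matrix.unitaryGroup (Fin 2) ℂ ∧ (1 - mpsi x).det ≠ 0 ∧
      ((1 + mpsi x).det = 0 ↔ mq x = 0) := by
  have hA : IsUnit (mphi x + Complex.I • 1).det :=
    isUnit_iff_ne_zero.mpr (det_mphi_add_ne x)
  refine ⟨cayley_unitary (mphi_herm x) hA, det_one_sub_cayley hA, ?_⟩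
  rw [mpsi, det_one_add_cayley hA, det_mphi]
  simp

theorem stmt2 :
    mpsi ⁻¹' {U : Mat2 | U ∈ Matrix.unitaryGroup (Fin 2) ℂ ∧
        (1 + U).det = 0 ∧ (1 - U).det ≠ 0} = {x : Fin 4 → ℝ | mq x = 0} ∧
    Set.BijOn mpsi {x : Fin 4 → ℝ | mq x = 0}
      {U : Mat2 | U ∈ Matrix.unitaryGroup (Fin 2) ℂ ∧ (1 + U).det = 0 ∧ (1 - U).det ≠ 0} := by
  have mem_iff : ∀ x : Fin 4 → ℝ,
      (mpsi x ∈ Matrix.unitaryGroup (Fin 2) ℂ ∧ (1 + mpsi x).det = 0 ∧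
        (1 - mpsi x).det ≠ 0) ↔ mq x = 0 := by
    intro x
    obtain ⟨hu, hs, ha⟩ := mpsi_key x
    constructor
    · rintro ⟨-, hd, -⟩; exact ha.mp hd
    · intro h; exact ⟨hu, ha.mpr h, hs⟩
  constructor
  · ext x
    simpa using mem_iff x
  · refine ⟨fun x hx => (mem_iff x).mpr hx, ?_, ?_⟩
    · intro x _ y _ h
      have hAX : IsUnit (mphi x + Complex.I • 1).det :=
        isUnit_iff_ne_zero.mpr (det_mphi_add_ne x)
      have hAY : IsUnit (mphi y + Complex.I • 1).det :=
        isUnit_iff_ne_zero.mpr (det_mphi_add_ne y)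
      exact mphi_inj (cayley_inj hAX hAY h)
    · rintro U ⟨hu, h1, h2⟩
      obtain ⟨x, hq, hc⟩ := surj_aux hu h1 h2
      exact ⟨x, hq, hc⟩
end
end

section
/- Let σ be a Hermitian 2×2 complex matrix, x ∈ M, X = φ(x) and U = ψ(x). Then for all real τ in some neighborhood of 0 the unitary matrix e^{iτσ}U satisfies det(I − e^{iτσ}U) ≠ 0, so X(τ) = i(I + e^{iτσ}U)(I − e^{iτσ}U)⁻¹ is a well-defined Hermitian matrix with X(0) = X, and its derivative at τ = 0 equals (i/2)(σX − Xσ) + (1/2)σ + (1/2)XσX. (These are the conformal Killing vector fields on Minkowski space generated by the left action of one-parameter subgroups of U(2) on itself.) -/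
noncomputable section

open Matrix Complex NormedSpace

/-- The curve τ ↦ X(τ) = i (I + e^{iτσ}U)(I − e^{iτσ}U)⁻¹ obtained by inverse Cayley
transforming the left translate e^{iτσ}·ψ(x). -/
def Xcurve (σ : Mat2) (x : Fin 4 → ℝ) (τ : ℝ) : Mat2 :=
  Complex.I • ((1 + NormedSpace.exp ((Complex.I * (τ : ℂ)) • σ) * mpsi x) *
    (1 - NormedSpace.exp ((Complex.I * (τ : ℂ)) • σ) * mpsi x)⁻¹)


/-! For Hermitian `X`, the Cayley transform `U = (X - i)(X + i)⁻¹` is unitary and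
`1 - U = 2i (X + i)⁻¹`, so the inverse Cayley transform `A ↦ i (1 + A)(1 - A)⁻¹` recovers `X`
from `U`; it sends every unitary `A` with `1 - A` invertible to a Hermitian matrix. As `e^{iτσ}`
is unitary, `X(τ)` is Hermitian as long as `det (1 - e^{iτσ} U) ≠ 0`, which holds near `τ = 0`
by continuity. The derivative of the inverse Cayley transform along a curve `A(τ)` is
`2i (1 - A)⁻¹ A' (1 - A)⁻¹`; at `A = U`, `A' = iσU` this is `½ (X + i) σ (X - i)`, and
expanding gives the formula. -/

open scoped ComplexOrder

section Cayley

variable {n : Type*} [Fintype n] [DecidableEq n]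

theorem Matrix.IsHermitian.isUnit_det_add_I_smul_one {X : Matrix n n ℂ} (hX : X.IsHermitian) :
    IsUnit (X + I • 1).det := by
  have hPD : ((X + I • 1)ᴴ * (X + I • 1)).PosDef := by
    have h : (X + I • 1)ᴴ * (X + I • 1) = Xᴴ * X + 1 := by
      rw [conjTranspose_add, hX.eq, conjTranspose_smul, conjTranspose_one, star_def, conj_I]
      simp only [Matrix.add_mul, Matrix.mul_add, Matrix.smul_mul, Matrix.mul_smul,
        Matrix.mul_one, Matrix.one_mul]
      rw [smul_add, smul_smul, mul_neg, I_mul_I, neg_neg, one_smul]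
      module
    rw [h]
    exact PosDef.posSemidef_add (posSemidef_conjTranspose_mul_self X) PosDef.one
  have := (Matrix.isUnit_iff_isUnit_det _).mp hPD.isUnit
  rw [det_mul] at this
  exact isUnit_of_mul_isUnit_right this

theorem Matrix.exp_mem_unitary_of_mem_skewAdjoint {A : Matrix n n ℂ} (hA : A ∈ skewAdjoint _) :
    exp A ∈ unitary (Matrix n n ℂ) := by
  have hdet : IsUnit (exp A).det := (isUnit_iff_isUnit_det _).mp (isUnit_exp A)
  rw [Unitary.mem_iff, star_eq_conjTranspose, ← exp_conjTranspose, ← star_eq_conjTranspose,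
    skewAdjoint.mem_iff.mp hA, exp_neg]
  exact ⟨nonsing_inv_mul _ hdet, mul_nonsing_inv _ hdet⟩

def invCayley (A : Matrix n n ℂ) : Matrix n n ℂ := I • ((1 + A) * (1 - A)⁻¹)

theorem isHermitian_invCayley {A : Matrix n n ℂ} (hA : A ∈ unitary (Matrix n n ℂ))
    (h : IsUnit (1 - A).det) : (invCayley A).IsHermitian := by
  have hAH : (1 - A)ᴴ = 1 - Aᴴ := by simp
  have h' : IsUnit (1 - Aᴴ).det := by rw [← hAH, det_conjTranspose]; exact h.star
  have hunit : (1 + Aᴴ) * (1 - A) = -((1 - Aᴴ) * (1 + A)) := by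
    simp only [Matrix.add_mul, Matrix.mul_sub, Matrix.sub_mul, Matrix.mul_add, Matrix.one_mul,
      Matrix.mul_one, ← star_eq_conjTranspose, Unitary.star_mul_self_of_mem hA]
    abel
  have hswap : (1 - Aᴴ)⁻¹ * (1 + Aᴴ) = -((1 + A) * (1 - A)⁻¹) :=
    calc (1 - Aᴴ)⁻¹ * (1 + Aᴴ) = (1 - Aᴴ)⁻¹ * ((1 + Aᴴ) * (1 - A)) * (1 - A)⁻¹ := by
          rw [Matrix.mul_assoc, Matrix.mul_assoc, mul_nonsing_inv _ h, Matrix.mul_one]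
      _ = -((1 + A) * (1 - A)⁻¹) := by
          rw [hunit, Matrix.mul_neg, ← Matrix.mul_assoc, nonsing_inv_mul _ h', Matrix.one_mul,
            Matrix.neg_mul]
  rw [IsHermitian, invCayley, conjTranspose_smul, conjTranspose_mul, conjTranspose_nonsing_inv,
    hAH, conjTranspose_add, conjTranspose_one, hswap, star_def, conj_I, smul_neg, neg_smul, neg_neg]

variable {X : Mat2}

theorem cayley_mul_add_I_smul_one (hX : X.IsHermitian) : cayley X * (X + I • 1) = X - I • 1 := by
  rw [cayley, Matrix.mul_assoc, nonsing_inv_mul _ hX.isUnit_det_add_I_smul_one, Matrix.mul_one]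

theorem one_sub_cayley_mul (hX : X.IsHermitian) :
    (1 - cayley X) * ((-I / 2) • (X + I • 1)) = 1 := by
  rw [Matrix.mul_smul, Matrix.sub_mul, Matrix.one_mul, cayley_mul_add_I_smul_one hX,
    add_sub_sub_cancel, ← two_smul ℂ, smul_smul, smul_smul]
  rw [show -I / 2 * 2 * I = 1 by linear_combination -I_sq, one_smul]

theorem inv_one_sub_cayley (hX : X.IsHermitian) : (1 - cayley X)⁻¹ = (-I / 2) • (X + I • 1) :=
  inv_eq_right_inv (one_sub_cayley_mul hX)

theorem isUnit_det_one_sub_cayley (hX : X.IsHermitian) : IsUnit (1 - cayley X).det :=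
  isUnit_det_of_right_inverse (one_sub_cayley_mul hX)

theorem cayley_mem_unitary (hX : X.IsHermitian) : cayley X ∈ unitary Mat2 := by
  have hP := hX.isUnit_det_add_I_smul_one
  have hPH : (X + I • 1)ᴴ = X - I • 1 := by
    rw [conjTranspose_add, hX.eq, conjTranspose_smul, conjTranspose_one, star_def, conj_I,
      neg_smul, sub_eq_add_neg]
  have hQH : (X - I • 1)ᴴ = X + I • 1 := by rw [← hPH, conjTranspose_conjTranspose]
  have hQ : IsUnit (X - I • 1).det := by rw [← hPH, det_conjTranspose]; exact hP.star
  have hI : Commute X (I • 1) := (Commute.one_right X).smul_right I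
  have hPQ : Commute (X + I • 1) (X - I • 1) :=
    ((Commute.refl X).sub_right hI).add_left (hI.symm.sub_right (Commute.refl _))
  refine mem_unitaryGroup_iff'.mpr ?_
  rw [star_eq_conjTranspose, cayley, conjTranspose_mul, conjTranspose_nonsing_inv, hPH, hQH,
    ← Matrix.mul_assoc, Matrix.mul_assoc _ (X + I • 1), hPQ.eq, ← Matrix.mul_assoc,
    nonsing_inv_mul _ hQ, Matrix.one_mul, mul_nonsing_inv _ hP]

theorem invCayley_cayley (hX : X.IsHermitian) : invCayley (cayley X) = X := by
  rw [invCayley, inv_one_sub_cayley hX, Matrix.mul_smul, Matrix.add_mul, Matrix.one_mul,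
    cayley_mul_add_I_smul_one hX, smul_smul]
  rw [show I * (-I / 2) = 1 / 2 by linear_combination (-1 / 2 : ℂ) * I_sq]
  module

end Cayley

section Calculus

-- Any norm gives the same derivatives; the operator norm makes matrices a normed algebra.
open scoped Matrix.Norms.Operator

theorem HasDerivAt.matrix_apply {m n : Type*} [Fintype m] [Fintype n] {f : ℝ → Matrix m n ℂ}
    {f' : Matrix m n ℂ} {t : ℝ} (hf : HasDerivAt f f' t) (i : m) (j : n) :
    HasDerivAt (fun τ => f τ i j) (f' i j) t :=
  (entryLinearMap ℝ ℂ i j).toContinuousLinearMap.hasFDerivAt.comp_hasDerivAt t hf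

variable {n : Type*} [Fintype n] [DecidableEq n]

theorem HasDerivAt.invCayley {f : ℝ → Matrix n n ℂ} {f' : Matrix n n ℂ} {t : ℝ}
    (hf : HasDerivAt f f' t) (h : IsUnit (1 - f t).det) :
    HasDerivAt (fun τ => invCayley (f τ)) ((2 * I) • ((1 - f t)⁻¹ * f' * (1 - f t)⁻¹)) t := by
  set R := (1 - f t)⁻¹
  have hu : IsUnit (1 - f t) := (isUnit_iff_isUnit_det _).mpr h
  have hRu : ((hu.unit⁻¹ : (Matrix n n ℂ)ˣ) : Matrix n n ℂ) = R := by
    rw [← Ring.inverse_unit, IsUnit.unit_spec, ← nonsing_inv_eq_ringInverse]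
  have hinv : HasDerivAt (fun τ => Ring.inverse (1 - f τ)) (R * f' * R) t := by
    refine ((hasFDerivAt_ringInverse (𝕜 := ℝ) hu.unit).comp_hasDerivAt t
      (hf.const_sub 1)).congr_deriv ?_
    simp [hRu]
  have hfun : (fun τ => _root_.invCayley (f τ)) =
      fun τ => I • ((1 + f τ) * Ring.inverse (1 - f τ)) := by
    funext τ
    rw [_root_.invCayley, nonsing_inv_eq_ringInverse]
  have hR : (1 - f t) * R = 1 := mul_nonsing_inv _ h
  rw [hfun]
  refine (((hf.const_add 1).mul hinv).const_smul I).congr_deriv ?_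
  have hf'R : f' * R = (1 - f t) * (R * f' * R) := by
    rw [← Matrix.mul_assoc, ← Matrix.mul_assoc, hR, Matrix.one_mul]
  rw [← nonsing_inv_eq_ringInverse, hf'R, Matrix.sub_mul, Matrix.add_mul, Matrix.one_mul]
  module

theorem hasDerivAt_exp_I_mul_smul (A : Matrix n n ℂ) :
    HasDerivAt (fun τ : ℝ => exp ((I * (τ : ℂ)) • A)) (I • A) 0 := by
  have h := hasDerivAt_exp_smul_const' (𝕂 := ℝ) (I • A) 0
  rw [zero_smul, NormedSpace.exp_zero, Matrix.mul_one] at h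
  have hfun : (fun τ : ℝ => exp ((I * (τ : ℂ)) • A)) = fun τ : ℝ => exp (τ • I • A) := by
    funext τ
    rw [mul_comm, mul_smul, Complex.coe_smul]
  rwa [hfun]

theorem hasDerivAt_invCayley_exp_mul_cayley {X : Mat2} (hX : X.IsHermitian) (σ : Mat2) :
    HasDerivAt (fun τ : ℝ => invCayley (exp ((I * (τ : ℂ)) • σ) * cayley X))
      ((1 / 2 : ℂ) • ((X + I • 1) * σ * (X - I • 1))) 0 := by
  have h := ((hasDerivAt_exp_I_mul_smul σ).mul_const (cayley X)).invCayley
  simp only [ofReal_zero, mul_zero, zero_smul, NormedSpace.exp_zero, Matrix.one_mul] at h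
  refine (h (isUnit_det_one_sub_cayley hX)).congr_deriv ?_
  rw [inv_one_sub_cayley hX]
  simp only [Matrix.smul_mul, Matrix.mul_smul, smul_smul]
  rw [Matrix.mul_assoc _ (σ * cayley X), Matrix.mul_assoc σ, cayley_mul_add_I_smul_one hX,
    Matrix.mul_assoc (X + I • 1) σ]
  congr 1
  linear_combination (I ^ 2 - 1) / 2 * I_sq

end Calculus

theorem isHermitian_mphi (x : Fin 4 → ℝ) : (mphi x).IsHermitian := by
  ext i j
  fin_cases i <;> fin_cases j <;> simp [mphi, Complex.ext_iff]

theorem half_smul_add_I_mul_mul_sub_I {n : Type*} [Fintype n] [DecidableEq n]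
    (X σ : Matrix n n ℂ) :
    (1 / 2 : ℂ) • ((X + I • 1) * σ * (X - I • 1)) =
      (I / 2) • (σ * X - X * σ) + (1 / 2 : ℂ) • σ + (1 / 2 : ℂ) • (X * σ * X) := by
  simp only [Matrix.add_mul, Matrix.mul_sub, Matrix.smul_mul, Matrix.mul_smul, Matrix.one_mul,
    Matrix.mul_one]
  match_scalars <;> ring_nf
  norm_num [I_sq]

theorem stmt18 (σ : Mat2) (hσ : σ.IsHermitian) (x : Fin 4 → ℝ) :
    ∃ ε > 0,
      (∀ τ : ℝ, |τ| < ε →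
        (1 - NormedSpace.exp ((Complex.I * (τ : ℂ)) • σ) * mpsi x).det ≠ 0 ∧
        (Xcurve σ x τ).IsHermitian) ∧
      Xcurve σ x 0 = mphi x ∧
      (∀ i j : Fin 2,
        HasDerivAt (fun τ : ℝ => Xcurve σ x τ i j)
          (((Complex.I / 2) • (σ * mphi x - mphi x * σ) +
            (1/2 : ℂ) • σ + (1/2 : ℂ) • (mphi x * σ * mphi x)) i j) 0) := by
  have hX := isHermitian_mphi x
  have hcont : ContinuousAt (fun τ : ℝ => 1 - exp ((I * (τ : ℂ)) • σ) * mpsi x) 0 := by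
    open scoped Matrix.Norms.Operator in
    exact (((hasDerivAt_exp_I_mul_smul σ).mul_const _).const_sub 1).continuousAt
  have hdet0 : (1 - exp ((I * ((0 : ℝ) : ℂ)) • σ) * mpsi x).det ≠ 0 := by
    rw [ofReal_zero, mul_zero, zero_smul, NormedSpace.exp_zero, Matrix.one_mul]
    exact (isUnit_det_one_sub_cayley hX).ne_zero
  obtain ⟨ε, hε, hdet⟩ := Metric.eventually_nhds_iff.mp
    ((continuous_id.matrix_det.continuousAt.comp hcont).eventually_ne hdet0)
  have hXcurve (τ : ℝ) : Xcurve σ x τ = invCayley (exp ((I * (τ : ℂ)) • σ) * cayley (mphi x)) :=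
    rfl
  refine ⟨ε, hε, fun τ hτ => ?_, ?_, fun i j => ?_⟩
  · have hdetτ := hdet (by rwa [Real.dist_eq, sub_zero])
    have hexp : exp ((I * (τ : ℂ)) • σ) ∈ unitary Mat2 :=
      Matrix.exp_mem_unitary_of_mem_skewAdjoint
        (hσ.isSelfAdjoint.smul_mem_skewAdjoint (by simp [skewAdjoint.mem_iff]))
    exact ⟨hdetτ, hXcurve τ ▸
      isHermitian_invCayley (mul_mem hexp (cayley_mem_unitary hX)) hdetτ.isUnit⟩
  · rw [hXcurve, ofReal_zero, mul_zero, zero_smul, NormedSpace.exp_zero, Matrix.one_mul]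
    exact invCayley_cayley hX
  · simp only [hXcurve, ← half_smul_add_I_mul_mul_sub_I]
    open scoped Matrix.Norms.Operator in
    exact (hasDerivAt_invCayley_exp_mul_cayley hX σ).matrix_apply i j
end
end
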